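/- Let k = 2ℓ+1 be odd and F the k-dimensional Lyness map. Then V_3 := W + W∘F, i.e. V_3(x) = [Π_{j=0}^{ℓ} x_{2j+1}(x_{2j+1}+1) + (a + Σ_{j=1}^{k} x_j)·Π_{j=1}^{ℓ} x_{2j}(x_{2j}+1)] / Π_{i=1}^{k} x_i, is a first integral of F on the positive orthant: V_3(F(x)) = V_3(x). -/

import Mathlib

/-!
Write `F x = (x₁, …, x_{2l}, z)` (indices from 0), so that `z x₀ = a + R` with `R = x₁ + ⋯ + x_{2l}`.
Let `Q = x₁ ⋯ x_{2l}` and let `A`, `B` be the products of `t (t + 1)` over `t = x₂, x₄, …, x_{2l}` and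
over `t = x₁, x₃, …, x_{2l-1}`. The shift swaps the roles of even and odd positions, and
`(a + R + z) / z = x₀ + 1`, `(a + R + x₀) / x₀ = z + 1` turn both `V₃ x` and `V₃ (F x)` into
`((x₀ + 1) A + (z + 1) B) / Q`.
-/

section ShiftProducts

variable {M : Type*} [CommMonoid M]

@[to_additive]
theorem prod_eq_prod_succ_mul_last_of_shift {n : ℕ} {f g : Fin (n + 1) → M}
    (h : ∀ i : Fin n, g i.castSucc = f i.succ) :
    ∏ i, g i = (∏ i : Fin n, f i.succ) * g (Fin.last n) := by
  rw [Fin.prod_univ_castSucc]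
  simp only [h]

variable {l : ℕ} {f g : Fin (2 * l + 1) → M}

theorem prod_even_eq_prod_odd_mul_last_of_shift (h : ∀ i : Fin (2 * l), g i.castSucc = f i.succ) :
    ∏ j : Fin (l + 1), g ⟨2 * j, by omega⟩ =
      (∏ j : Fin l, f ⟨2 * j + 1, by omega⟩) * g (Fin.last _) := by
  rw [Fin.prod_univ_castSucc]
  congr 1
  exact Finset.prod_congr rfl fun j _ => h ⟨2 * j, by omega⟩

theorem prod_even_eq_head_mul_prod_odd_of_shift (h : ∀ i : Fin (2 * l), g i.castSucc = f i.succ) :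
    ∏ j : Fin (l + 1), f ⟨2 * j, by omega⟩ = f 0 * ∏ j : Fin l, g ⟨2 * j + 1, by omega⟩ := by
  rw [Fin.prod_univ_succ]
  congr 1
  exact Finset.prod_congr rfl fun j _ => (h ⟨2 * j + 1, by omega⟩).symm

end ShiftProducts

theorem lyness_V3_reduced_eq {a x₀ z R A B Q : ℝ} (hx₀ : x₀ ≠ 0) (hz : z ≠ 0)
    (h : z * x₀ = a + R) :
    (B * (z * (z + 1)) + (a + (R + z)) * A) / (Q * z) =
      (x₀ * (x₀ + 1) * A + (a + (x₀ + R)) * B) / (x₀ * Q) := by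
  have hz' : (a + (R + z)) / z = x₀ + 1 := by rw [← add_assoc, ← h]; field_simp
  have hx₀' : (a + (x₀ + R)) / x₀ = z + 1 := by rw [add_left_comm, ← h]; field_simp; ring
  calc (B * (z * (z + 1)) + (a + (R + z)) * A) / (Q * z)
      = (B * (z + 1) + (a + (R + z)) / z * A) / Q := by field_simp
    _ = ((x₀ + 1) * A + (z + 1) * B) / Q := by rw [hz']; ring
    _ = (x₀ * (x₀ + 1) * A + (a + (x₀ + R)) * B) / (x₀ * Q) := by rw [← hx₀']; field_simp

/-- for odd `k = 2ℓ+1`, `V₃ = W + W∘F` is a first integral of `F`. -/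
theorem lyness_V3_first_integral (l : ℕ) (hl : 1 ≤ l) (a : ℝ) (ha : 0 ≤ a)
    (F : (Fin (2 * l + 1) → ℝ) → (Fin (2 * l + 1) → ℝ))
    (hF : ∀ x : Fin (2 * l + 1) → ℝ, ∀ i : Fin (2 * l + 1),
      F x i = if h : (i : ℕ) + 1 < 2 * l + 1 then x ⟨(i : ℕ) + 1, h⟩
              else (a + (∑ j, x j) - x ⟨0, by omega⟩) / x ⟨0, by omega⟩)
    (V3 : (Fin (2 * l + 1) → ℝ) → ℝ)
    (hV3 : ∀ x : Fin (2 * l + 1) → ℝ, V3 x =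
      ((∏ j : Fin (l + 1),
          (x ⟨2 * (j : ℕ), by have := j.isLt; omega⟩ *
            (x ⟨2 * (j : ℕ), by have := j.isLt; omega⟩ + 1)))
        + (a + ∑ j, x j) *
          ∏ j : Fin l,
            (x ⟨2 * (j : ℕ) + 1, by have := j.isLt; omega⟩ *
              (x ⟨2 * (j : ℕ) + 1, by have := j.isLt; omega⟩ + 1))) / ∏ i, x i)
    (x : Fin (2 * l + 1) → ℝ) (hx : ∀ i, 0 < x i) :
    V3 (F x) = V3 x := by
  set y := F x with hy
  have hshift : ∀ i : Fin (2 * l), y i.castSucc = x i.succ := fun i => by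
    rw [hy, hF, dif_pos (by simp)]; rfl
  have hx0 : x 0 ≠ 0 := (hx 0).ne'
  set R := ∑ i : Fin (2 * l), x i.succ
  have hz : y (Fin.last _) * x 0 = a + R := by
    rw [hy, hF, dif_neg (by simp), Fin.zero_eta, Fin.sum_univ_succ]
    field_simp
    ring
  set z := y (Fin.last _)
  have hR : 0 < R := Finset.sum_pos (fun i _ => hx _) ⟨⟨0, by omega⟩, Finset.mem_univ _⟩
  have hz_ne : z ≠ 0 := fun hz0 => by
    rw [hz0, zero_mul] at hz
    linarith
  have hsum_y : ∑ i, y i = R + z := sum_eq_sum_succ_add_last_of_shift hshift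
  have hprod_y : ∏ i, y i = (∏ i : Fin (2 * l), x i.succ) * z :=
    prod_eq_prod_succ_mul_last_of_shift hshift
  have heven_y := prod_even_eq_prod_odd_mul_last_of_shift
    (f := fun i => x i * (x i + 1)) (g := fun i => y i * (y i + 1)) fun i => by rw [hshift]
  have heven_x := prod_even_eq_head_mul_prod_odd_of_shift
    (f := fun i => x i * (x i + 1)) (g := fun i => y i * (y i + 1)) fun i => by rw [hshift]
  rw [hV3, hV3, hsum_y, hprod_y, Fin.sum_univ_succ x, Fin.prod_univ_succ x, heven_y, heven_x]
  exact lyness_V3_reduced_eq hx0 hz_ne hz
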